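/- arXiv:0802.3505 — 4 statements merged into one kernel-verified Lean document; each statement's English description precedes it below -/
import Mathlib

section
/- If u : D → [−∞, +∞) is K₁-quasi-nearly subharmonic and v : D → [−∞, +∞) is K₂-quasi-nearly subharmonic, then max{u, v} is max{K₁, K₂}-quasi-nearly subharmonic on D. In particular, u⁺ = max{u, 0} is K₁-quasi-nearly subharmonic. -/
/-!
Truncation commutes with maxima: `max (max u v) (-M) + M = max u_M v_M`. Each of `u_M`, `v_M`
satisfies its sub-mean-value inequality, and the right-hand side only grows when the integrand is
replaced by the larger function `max u_M v_M` or the constant by `max K₁ K₂`. For `u⁺` take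
`v = 0`, which is `K₁`-quasi-nearly subharmonic because `K₁ ≥ 1` and the mean value of a constant
over a ball is that constant.
-/

open MeasureTheory Metric Set

noncomputable def unitBallVol (E : Type*) [NormedAddCommGroup E] [MeasureSpace E] : ℝ :=
  (volume (ball (0 : E) 1)).toReal

/-- `u` is `K`-quasi-nearly subharmonic n.s. (in the narrow sense) on `D` in dimension `N`:
`u` is measurable, `u⁺` is locally integrable on `D`, and the generalized sub-mean-value
inequality holds for `u` on all closed balls contained in `D`. -/
def IsQNSns {E : Type*} [NormedAddCommGroup E] [MeasureSpace E]
    (N : ℕ) (K : ℝ) (D : Set E) (u : E → ℝ) : Prop :=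
  Measurable u ∧ LocallyIntegrableOn (fun x => max (u x) 0) D ∧
  ∀ x : E, ∀ r : ℝ, 0 < r → closedBall x r ⊆ D →
    u x ≤ (K / (unitBallVol E * r ^ N)) * ∫ y in ball x r, u y

/-- `u` is `K`-quasi-nearly subharmonic on `D`: `u` is measurable, `u⁺` is locally integrable
on `D`, and for every `M ≥ 0` the function `u_M := max {u, -M} + M` satisfies the generalized
sub-mean-value inequality on all closed balls contained in `D`. -/
def IsQNS {E : Type*} [NormedAddCommGroup E] [MeasureSpace E]
    (N : ℕ) (K : ℝ) (D : Set E) (u : E → ℝ) : Prop :=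
  Measurable u ∧ LocallyIntegrableOn (fun x => max (u x) 0) D ∧
  ∀ M : ℝ, 0 ≤ M → ∀ x : E, ∀ r : ℝ, 0 < r → closedBall x r ⊆ D →
    max (u x) (-M) + M ≤ (K / (unitBallVol E * r ^ N)) * ∫ y in ball x r, (max (u y) (-M) + M)

theorem MeasureTheory.LocallyIntegrableOn.sup {X : Type*} [TopologicalSpace X]
    [MeasurableSpace X] {μ : Measure X} {s : Set X} {f g : X → ℝ}
    (hf : LocallyIntegrableOn f s μ) (hg : LocallyIntegrableOn g s μ) :
    LocallyIntegrableOn (f ⊔ g) s μ := by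
  intro x hx
  obtain ⟨t, ht, hft⟩ := hf x hx
  obtain ⟨t', ht', hgt'⟩ := hg x hx
  exact ⟨t ∩ t', Filter.inter_mem ht ht',
    (hft.mono_set inter_subset_left).sup (hgt'.mono_set inter_subset_right)⟩

theorem zero_le_max_neg_add (a M : ℝ) : 0 ≤ max a (-M) + M :=
  neg_le_iff_add_nonneg.1 (le_max_right a (-M))

section QNS

variable {E : Type*} [NormedAddCommGroup E] [MeasureSpace E] {N : ℕ} {K : ℝ} {D : Set E}
  {u v : E → ℝ}

theorem integrableOn_max_neg_add_of_isCompact [OpensMeasurableSpace E]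
    [IsFiniteMeasureOnCompacts (volume : Measure E)] (hu : Measurable u)
    (hu_loc : LocallyIntegrableOn (fun x => max (u x) 0) D) {M : ℝ} (hM : 0 ≤ M)
    {s : Set E} (hs : IsCompact s) (hsD : s ⊆ D) :
    IntegrableOn (fun y => max (u y) (-M) + M) s := by
  have hbound : IntegrableOn (fun y => max (u y) 0 + M) s :=
    (hu_loc.integrableOn_compact_subset hsD hs).add (integrableOn_const hs.measure_lt_top.ne)
  refine hbound.mono' ((hu.max measurable_const).add measurable_const).aestronglyMeasurable
    (ae_of_all _ fun y => ?_)
  rw [Real.norm_eq_abs, abs_le]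
  constructor <;> linarith [le_max_right (u y) (-M), max_le_max_left (u y) (neg_nonpos.2 hM)]

theorem IsQNS.mono {K' : ℝ} (hu : IsQNS N K D u) (hKK' : K ≤ K') : IsQNS N K' D u := by
  refine ⟨hu.1, hu.2.1, fun M hM x r hr hxr => (hu.2.2 M hM x r hr hxr).trans ?_⟩
  have hc : 0 ≤ unitBallVol E * r ^ N := by unfold unitBallVol; positivity
  exact mul_le_mul_of_nonneg_right (div_le_div_of_nonneg_right hKK' hc)
    (integral_nonneg fun y => zero_le_max_neg_add (u y) M)

theorem IsQNS.max_neg_add_le_of_le (hu : IsQNS N K D u) (hK : 0 ≤ K) {M : ℝ} (hM : 0 ≤ M)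
    {x : E} {r : ℝ} (hr : 0 < r) (hxr : closedBall x r ⊆ D) {g : E → ℝ}
    (hg : IntegrableOn g (ball x r)) (hug : ∀ y, max (u y) (-M) + M ≤ g y) :
    max (u x) (-M) + M ≤ K / (unitBallVol E * r ^ N) * ∫ y in ball x r, g y := by
  have hc : 0 ≤ K / (unitBallVol E * r ^ N) := by unfold unitBallVol; positivity
  exact (hu.2.2 M hM x r hr hxr).trans <| mul_le_mul_of_nonneg_left
    (integral_mono_of_nonneg (ae_of_all _ fun y => zero_le_max_neg_add (u y) M) hg
      (ae_of_all _ hug)) hc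

theorem IsQNS.sup [ProperSpace E] [OpensMeasurableSpace E]
    [IsFiniteMeasureOnCompacts (volume : Measure E)] (hu : IsQNS N K D u) (hv : IsQNS N K D v)
    (hK : 0 ≤ K) : IsQNS N K D (fun x => max (u x) (v x)) := by
  have hmeas : Measurable fun x => max (u x) (v x) := hu.1.max hv.1
  have hloc : LocallyIntegrableOn (fun x => max (max (u x) (v x)) 0) D := by
    convert hu.2.1.sup hv.2.1 using 1
    exact funext fun x => sup_sup_distrib_right _ _ _
  refine ⟨hmeas, hloc, fun M hM x r hr hxr => ?_⟩
  have htrunc : ∀ y, max (max (u y) (v y)) (-M) + M =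
      max (max (u y) (-M) + M) (max (v y) (-M) + M) := fun y => by
    rw [sup_sup_distrib_right, max_add_add_right]
  have hint := (integrableOn_max_neg_add_of_isCompact hmeas hloc hM (isCompact_closedBall x r)
    hxr).mono_set ball_subset_closedBall
  simp only [htrunc] at hint ⊢
  exact max_le (hu.max_neg_add_le_of_le hK hM hr hxr hint fun _ => le_max_left _ _)
    (hv.max_neg_add_le_of_le hK hM hr hxr hint fun _ => le_max_right _ _)

end QNS

theorem measureReal_ball_eq_unitBallVol_mul {E : Type*} [NormedAddCommGroup E]
    [NormedSpace ℝ E] [MeasureSpace E] [BorelSpace E] [FiniteDimensional ℝ E]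
    [(volume : Measure E).IsAddHaarMeasure] (x : E) {r : ℝ} (hr : 0 < r) :
    volume.real (ball x r) = unitBallVol E * r ^ Module.finrank ℝ E := by
  rw [measureReal_def, Measure.addHaar_ball_of_pos volume x hr, ENNReal.toReal_mul,
    ENNReal.toReal_ofReal (by positivity), unitBallVol, mul_comm]

theorem isQNS_const {E : Type*} [NormedAddCommGroup E] [NormedSpace ℝ E] [MeasureSpace E]
    [BorelSpace E] [FiniteDimensional ℝ E] [(volume : Measure E).IsAddHaarMeasure]
    {K : ℝ} (hK : 1 ≤ K) (D : Set E) (a : ℝ) :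
    IsQNS (Module.finrank ℝ E) K D (fun _ => a) := by
  refine ⟨measurable_const, (locallyIntegrable_const _).locallyIntegrableOn D,
    fun M hM x r hr _ => ?_⟩
  have hc : 0 < unitBallVol E * r ^ Module.finrank ℝ E :=
    mul_pos (ENNReal.toReal_pos (measure_ball_pos _ _ one_pos).ne' measure_ball_lt_top.ne)
      (pow_pos hr _)
  rw [setIntegral_const, measureReal_ball_eq_unitBallVol_mul x hr, smul_eq_mul,
    ← mul_assoc, div_mul_cancel₀ _ hc.ne']
  nlinarith [zero_le_max_neg_add a M]

theorem stmt_3_general {N : ℕ} {K₁ K₂ : ℝ} (hK₁ : 1 ≤ K₁)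
    (D : Set (EuclideanSpace ℝ (Fin N)))
    (u v : EuclideanSpace ℝ (Fin N) → ℝ)
    (hu : IsQNS N K₁ D u) (hv : IsQNS N K₂ D v) :
    IsQNS N (max K₁ K₂) D (fun x => max (u x) (v x)) ∧
      IsQNS N K₁ D (fun x => max (u x) 0) := by
  have hK₁_nonneg : 0 ≤ K₁ := zero_le_one.trans hK₁
  have hzero : IsQNS N K₁ D (fun _ => 0) := by simpa using isQNS_const hK₁ D (0 : ℝ)
  exact ⟨(hu.mono (le_max_left K₁ K₂)).sup (hv.mono (le_max_right K₁ K₂))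
      (hK₁_nonneg.trans (le_max_left K₁ K₂)), hu.sup hzero hK₁_nonneg⟩

/-- the pointwise maximum of a `K₁`- and a `K₂`-quasi-nearly subharmonic
function is `max {K₁, K₂}`-quasi-nearly subharmonic; in particular `u⁺ = max {u, 0}` is
`K₁`-quasi-nearly subharmonic. -/
theorem stmt_3 {N : ℕ} (hN : 2 ≤ N) {K₁ K₂ : ℝ} (hK₁ : 1 ≤ K₁) (hK₂ : 1 ≤ K₂)
    (D : Set (EuclideanSpace ℝ (Fin N))) (hDo : IsOpen D) (hDc : IsConnected D)
    (u v : EuclideanSpace ℝ (Fin N) → ℝ)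
    (hu : IsQNS N K₁ D u) (hv : IsQNS N K₂ D v) :
    IsQNS N (max K₁ K₂) D (fun x => max (u x) (v x)) ∧
      IsQNS N K₁ D (fun x => max (u x) 0) :=
  stmt_3_general hK₁ D u v hu hv
end

section
/- Let F be a family of K-quasi-nearly subharmonic functions on a domain D ⊆ ℝ^N and let w := sup_{u ∈ F} u. If w is Lebesgue measurable and w⁺ is locally integrable, then w is K-quasi-nearly subharmonic on D. -/
open MeasureTheory Metric Set

/-! The truncation `t ↦ max t (-M) + M` is monotone and continuous, so the truncation of `w` is the
pointwise supremum of the truncations of the `F i`. Each of these satisfies the sub-mean-value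
inequality, and its integral over the ball is bounded by that of the truncation of `w`, which is
finite because `w⁺` is locally integrable. -/

lemma IsLUB.range_comp_of_monotone {ι α β : Type*} [Nonempty ι] [TopologicalSpace α]
    [LinearOrder α] [OrderTopology α] [TopologicalSpace β] [Preorder β] [OrderClosedTopology β]
    {f : ι → α} {a : α} (ha : IsLUB (range f) a) {g : α → β} (hg : Monotone g)
    (hgc : ContinuousAt g a) : IsLUB (range (g ∘ f)) (g a) := by
  rw [range_comp]
  exact ha.isLUB_of_tendsto (hg.monotoneOn _) (range_nonempty f) (hgc.mono_left nhdsWithin_le_nhds)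

lemma IntegrableOn.max_neg_add {α : Type*} [MeasurableSpace α] {μ : Measure α} {s : Set α}
    {u : α → ℝ} (hu : AEStronglyMeasurable u (μ.restrict s))
    (hpos : IntegrableOn (fun y => max (u y) 0) s μ) (hs : μ s ≠ ⊤) {M : ℝ} (hM : 0 ≤ M) :
    IntegrableOn (fun y => max (u y) (-M) + M) s μ := by
  refine Integrable.mono' (hpos.add (integrableOn_const hs))
    ((hu.sup aestronglyMeasurable_const).add aestronglyMeasurable_const) (ae_of_all _ fun y => ?_)
  rw [Real.norm_of_nonneg (neg_le_iff_add_nonneg.mp (le_max_right _ _))]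
  exact add_le_add_left (max_le_max_left _ (neg_nonpos.2 hM)) M

lemma le_mul_setIntegral_of_isLUB {α ι : Type*} [MeasurableSpace α] {μ : Measure α} {s : Set α}
    {c : ℝ} (hc : 0 ≤ c) {F : ι → α → ℝ} {w : α → ℝ} {x : α}
    (hwx : IsLUB (range fun i => F i x) (w x))
    (hF : ∀ i, F i x ≤ c * ∫ y in s, F i y ∂μ) (hF0 : ∀ i, 0 ≤ᵐ[μ.restrict s] F i)
    (hFw : ∀ i, F i ≤ᵐ[μ.restrict s] w) (hw : IntegrableOn w s μ) :
    w x ≤ c * ∫ y in s, w y ∂μ := by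
  refine hwx.2 ?_
  rintro _ ⟨i, rfl⟩
  exact (hF i).trans (mul_le_mul_of_nonneg_left (integral_mono_of_nonneg (hF0 i) hw (hFw i)) hc)

theorem stmt_4_general {N : ℕ} {K : ℝ} (hK : 1 ≤ K)
    (D : Set (EuclideanSpace ℝ (Fin N)))
    {ι : Type*} [Nonempty ι] (F : ι → EuclideanSpace ℝ (Fin N) → ℝ)
    (hF : ∀ i, IsQNS N K D (F i))
    (w : EuclideanSpace ℝ (Fin N) → ℝ)
    (hw : ∀ x ∈ D, IsLUB (Set.range fun i => F i x) (w x))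
    (hwmeas : Measurable w)
    (hwint : LocallyIntegrableOn (fun x => max (w x) 0) D) :
    IsQNS N K D w := by
  refine ⟨hwmeas, hwint, fun M hM x r hr hball => ?_⟩
  have hballD : ball x r ⊆ D := ball_subset_closedBall.trans hball
  have hmono : Monotone fun t : ℝ => max t (-M) + M := fun s t hst =>
    add_le_add_left (max_le_max_right _ hst) M
  have hc : 0 ≤ K / (unitBallVol (EuclideanSpace ℝ (Fin N)) * r ^ N) :=
    div_nonneg (zero_le_one.trans hK) (by unfold unitBallVol; positivity)
  refine le_mul_setIntegral_of_isLUB (F := fun i y => max (F i y) (-M) + M)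
    (w := fun y => max (w y) (-M) + M) hc
    ((hw x (hball (mem_closedBall_self hr.le))).range_comp_of_monotone hmono (by fun_prop))
    (fun i => (hF i).2.2 M hM x r hr hball)
    (fun i => ae_of_all _ fun y => neg_le_iff_add_nonneg.mp (le_max_right _ _))
    (fun i => (ae_restrict_mem measurableSet_ball).mono fun y hy =>
      hmono ((hw y (hballD hy)).1 ⟨i, rfl⟩))
    (IntegrableOn.max_neg_add hwmeas.aestronglyMeasurable
      ((hwint.integrableOn_compact_subset hball (isCompact_closedBall x r)).mono_set
        ball_subset_closedBall) measure_ball_lt_top.ne hM)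

/-- the pointwise supremum `w` of a family of `K`-quasi-nearly subharmonic
functions is `K`-quasi-nearly subharmonic, provided `w` is measurable and `w⁺` is
locally integrable. -/
theorem stmt_4 {N : ℕ} (hN : 2 ≤ N) {K : ℝ} (hK : 1 ≤ K)
    (D : Set (EuclideanSpace ℝ (Fin N))) (hDo : IsOpen D) (hDc : IsConnected D)
    {ι : Type*} [Nonempty ι] (F : ι → EuclideanSpace ℝ (Fin N) → ℝ)
    (hF : ∀ i, IsQNS N K D (F i))
    (w : EuclideanSpace ℝ (Fin N) → ℝ)
    (hw : ∀ x ∈ D, IsLUB (Set.range fun i => F i x) (w x))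
    (hwmeas : Measurable w)
    (hwint : LocallyIntegrableOn (fun x => max (w x) 0) D) :
    IsQNS N K D w :=
  stmt_4_general hK D F hF w hw hwmeas hwint
end

section
/- If u : D → [−∞, +∞) is K-quasi-nearly subharmonic n.s. on a domain D ⊆ ℝ^N and u is not identically −∞, then u is finite almost everywhere in D and u is locally integrable in D. -/
/-!
Where the negative part `u⁻` of `u` has finite integral over a ball, `u > -∞` almost everywhere
there, so `u` is finite at points arbitrarily close to any point of that ball. Conversely, at a
point where `u > -∞`, the integral of `u⁻` over every ball around it in `D` is finite, since
otherwise the right-hand side of the quasi-mean-value inequality (with `K > 0`) would be `-∞`.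
Hence the set of points of `D` having a ball in `D` on which `u⁻` has finite integral is both open
and relatively closed in `D`; it is nonempty since `u ≢ -∞`, so it is all of `D` by connectedness.
Both conclusions are local and follow.
-/

open MeasureTheory Metric Set
open scoped ENNReal

/-- The negative part of an extended real number, as an element of `[0, ∞]`. -/
noncomputable def erealNegPart (x : EReal) : ℝ≥0∞ :=
  if x = ⊥ then ⊤ else ENNReal.ofReal (-(x.toReal))

/-- The integral `∫_{B(x,r)} u dm ∈ [−∞, ∞)` of a function `u` with values in `[−∞, ∞)`
whose positive part is integrable: the (finite) integral of the positive part minus the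
(possibly infinite) integral of the negative part. -/
noncomputable def erealBallIntegral {E : Type*} [NormedAddCommGroup E] [MeasureSpace E]
    (u : E → EReal) (x : E) (r : ℝ) : EReal :=
  ((∫ y in ball x r, (max (u y) 0).toReal : ℝ) : EReal) -
    (∫⁻ y in ball x r, erealNegPart (u y)).toEReal

/-- `u : D → [−∞, ∞)` is `K`-quasi-nearly subharmonic n.s. on `D` in dimension `N`. -/
def IsQNSnsE {E : Type*} [NormedAddCommGroup E] [MeasureSpace E]
    (N : ℕ) (K : ℝ) (D : Set E) (u : E → EReal) : Prop :=
  Measurable u ∧ (∀ x, u x ≠ ⊤) ∧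
  LocallyIntegrableOn (fun x => (max (u x) 0).toReal) D ∧
  ∀ x : E, ∀ r : ℝ, 0 < r → closedBall x r ⊆ D →
    u x ≤ ((K / (unitBallVol E * r ^ N) : ℝ) : EReal) * erealBallIntegral u x r

/-- `u : D → [−∞, ∞)` is subharmonic on `D` in dimension `N`: upper semicontinuous on `D`,
never `+∞`, and satisfying the sub-mean-value inequality on closed balls in `D`
(`u ≡ −∞` is allowed). -/
def IsSubharmonicOn {E : Type*} [NormedAddCommGroup E] [MeasureSpace E]
    (N : ℕ) (D : Set E) (u : E → EReal) : Prop :=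
  UpperSemicontinuousOn u D ∧ (∀ x, u x ≠ ⊤) ∧
  ∀ x : E, ∀ r : ℝ, 0 < r → closedBall x r ⊆ D →
    u x ≤ ((1 / (unitBallVol E * r ^ N) : ℝ) : EReal) * erealBallIntegral u x r

open Filter Topology

@[simp]
lemma erealNegPart_bot : erealNegPart ⊥ = ⊤ := if_pos rfl

lemma measurable_erealNegPart : Measurable erealNegPart :=
  Measurable.ite (measurableSet_singleton ⊥) measurable_const
    (ENNReal.measurable_ofReal.comp measurable_ereal_toReal.neg)

lemma enorm_toReal_le_ofReal_add_erealNegPart (x : EReal) :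
    ‖x.toReal‖ₑ ≤ ENNReal.ofReal (max x 0).toReal + erealNegPart x := by
  induction x using EReal.rec with
  | bot => simp
  | top => simp
  | coe t =>
    have hneg : erealNegPart t = ENNReal.ofReal (-t) := if_neg (EReal.coe_ne_bot t)
    rw [hneg, EReal.toReal_coe, Real.enorm_eq_ofReal_abs]
    rcases le_total t 0 with ht | ht
    · rw [max_eq_right (EReal.coe_nonpos.2 ht), abs_of_nonpos ht]
      simp
    · rw [max_eq_left (EReal.coe_nonneg.2 ht), abs_of_nonneg ht, EReal.toReal_coe]
      exact le_self_add

section NegPart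

variable {α : Type*} [MeasurableSpace α] {μ : Measure α} {u : α → EReal} {s : Set α}

lemma ae_ne_bot_of_lintegral_erealNegPart_ne_top (hu : Measurable u)
    (hneg : ∫⁻ y in s, erealNegPart (u y) ∂μ ≠ ⊤) : ∀ᵐ y ∂μ.restrict s, u y ≠ ⊥ := by
  filter_upwards [ae_lt_top (measurable_erealNegPart.comp hu) hneg] with y hy hbot
  simp [hbot] at hy

lemma integrableOn_toReal_of_lintegral_erealNegPart_ne_top (hu : Measurable u)
    (hpos : IntegrableOn (fun y => (max (u y) 0).toReal) s μ)
    (hneg : ∫⁻ y in s, erealNegPart (u y) ∂μ ≠ ⊤) :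
    IntegrableOn (fun y => (u y).toReal) s μ := by
  refine ⟨(measurable_ereal_toReal.comp hu).aestronglyMeasurable, ?_⟩
  calc ∫⁻ y in s, ‖(u y).toReal‖ₑ ∂μ
      ≤ ∫⁻ y in s, (ENNReal.ofReal (max (u y) 0).toReal + erealNegPart (u y)) ∂μ :=
        lintegral_mono fun y => enorm_toReal_le_ofReal_add_erealNegPart (u y)
    _ = (∫⁻ y in s, ENNReal.ofReal (max (u y) 0).toReal ∂μ) +
          ∫⁻ y in s, erealNegPart (u y) ∂μ :=
        lintegral_add_right _ (measurable_erealNegPart.comp hu)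
    _ < ⊤ := ENNReal.add_lt_top.2 ⟨hpos.lintegral_lt_top, hneg.lt_top⟩

end NegPart

lemma ae_restrict_of_forall_mem_nhdsWithin {α : Type*} [TopologicalSpace α]
    [SecondCountableTopology α] [MeasurableSpace α] {μ : Measure α} {s : Set α} {p : α → Prop}
    (h : ∀ x ∈ s, ∃ t ∈ 𝓝[s] x, ∀ᵐ y ∂μ.restrict t, p y) : ∀ᵐ y ∂μ.restrict s, p y := by
  choose! t ht hp using h
  obtain ⟨c, hcs, hc, hcover⟩ := TopologicalSpace.countable_cover_nhdsWithin ht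
  exact ae_restrict_of_ae_restrict_of_subset hcover
    ((ae_restrict_biUnion_iff t hc p).2 fun x hx => hp x (hcs hx))

section Centers

variable {E : Type*} [NormedAddCommGroup E] [MeasureSpace E] {D : Set E} {u : E → EReal}

lemma unitBallVol_pos [ProperSpace E] [IsFiniteMeasureOnCompacts (volume : Measure E)]
    [(volume : Measure E).IsOpenPosMeasure] : 0 < unitBallVol E :=
  ENNReal.toReal_pos (measure_ball_pos volume 0 one_pos).ne' measure_ball_lt_top.ne

def negPartIntegrableCenters (D : Set E) (u : E → EReal) : Set E :=
  {x | ∃ r > 0, closedBall x r ⊆ D ∧ ∫⁻ y in ball x r, erealNegPart (u y) ≠ ⊤}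

lemma isOpen_negPartIntegrableCenters (D : Set E) (u : E → EReal) :
    IsOpen (negPartIntegrableCenters D u) := by
  refine Metric.isOpen_iff.2 fun x ⟨r, hr, hxr, hneg⟩ => ⟨r / 2, half_pos hr, fun y hy => ?_⟩
  have hyx : r / 2 + dist y x ≤ r := by linarith [mem_ball.1 hy]
  refine ⟨r / 2, half_pos hr, (closedBall_subset_closedBall' hyx).trans hxr, ?_⟩
  exact ne_top_of_le_ne_top hneg (lintegral_mono_set (ball_subset_ball' hyx))

lemma ae_restrict_ne_bot_of_subset_negPartIntegrableCenters [SecondCountableTopology E]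
    (hu : Measurable u) (hD : D ⊆ negPartIntegrableCenters D u) :
    ∀ᵐ x ∂volume.restrict D, u x ≠ ⊥ := by
  refine ae_restrict_of_forall_mem_nhdsWithin fun x hx => ?_
  obtain ⟨r, hr, -, hneg⟩ := hD hx
  exact ⟨ball x r, mem_nhdsWithin_of_mem_nhds (ball_mem_nhds x hr),
    ae_ne_bot_of_lintegral_erealNegPart_ne_top hu hneg⟩

lemma locallyIntegrableOn_toReal_of_subset_negPartIntegrableCenters [ProperSpace E]
    (hu : Measurable u) (hpos : LocallyIntegrableOn (fun x => (max (u x) 0).toReal) D)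
    (hD : D ⊆ negPartIntegrableCenters D u) :
    LocallyIntegrableOn (fun x => (u x).toReal) D := by
  intro x hx
  obtain ⟨r, hr, hxr, hneg⟩ := hD hx
  have hpos_ball := (hpos.integrableOn_compact_subset hxr (isCompact_closedBall x r)).mono_set
    ball_subset_closedBall
  exact ⟨ball x r, mem_nhdsWithin_of_mem_nhds (ball_mem_nhds x hr),
    integrableOn_toReal_of_lintegral_erealNegPart_ne_top hu hpos_ball hneg⟩

namespace IsQNSnsE

variable [ProperSpace E] [IsFiniteMeasureOnCompacts (volume : Measure E)]
  [(volume : Measure E).IsOpenPosMeasure] {N : ℕ} {K : ℝ}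

lemma lintegral_erealNegPart_ne_top (hu : IsQNSnsE N K D u) (hK : 0 < K) {x : E}
    (hx : u x ≠ ⊥) {r : ℝ} (hr : 0 < r) (hxr : closedBall x r ⊆ D) :
    ∫⁻ y in ball x r, erealNegPart (u y) ≠ ⊤ := by
  intro htop
  have hcoef : (0 : EReal) < ((K / (unitBallVol E * r ^ N) : ℝ) : EReal) :=
    EReal.coe_pos.2 (div_pos hK (mul_pos unitBallVol_pos (pow_pos hr N)))
  have hmean := hu.2.2.2 x r hr hxr
  rw [erealBallIntegral, htop, EReal.coe_ennreal_top, EReal.sub_top,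
    EReal.mul_bot_of_pos hcoef] at hmean
  exact hx (le_bot_iff.1 hmean)

lemma mem_negPartIntegrableCenters (hu : IsQNSnsE N K D u) (hK : 0 < K) (hD : IsOpen D)
    {x : E} (hxD : x ∈ D) (hx : u x ≠ ⊥) : x ∈ negPartIntegrableCenters D u := by
  obtain ⟨r, hr, hxr⟩ := nhds_basis_closedBall.mem_iff.1 (hD.mem_nhds hxD)
  exact ⟨r, hr, hxr, hu.lintegral_erealNegPart_ne_top hK hx hr hxr⟩

lemma isOpen_diff_negPartIntegrableCenters (hu : IsQNSnsE N K D u) (hK : 0 < K)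
    (hD : IsOpen D) : IsOpen (D \ negPartIntegrableCenters D u) := by
  refine Metric.isOpen_iff.2 fun x ⟨hxD, hxA⟩ => ?_
  obtain ⟨r, hr, hxr⟩ := nhds_basis_closedBall.mem_iff.1 (hD.mem_nhds hxD)
  refine ⟨r / 4, by positivity, fun y hy => ⟨?_, ?_⟩⟩
  · exact hxr (closedBall_subset_closedBall (by linarith) (ball_subset_closedBall hy))
  rintro ⟨s, hs, -, hneg⟩
  have hmeas : volume (ball y s ∩ ball x (r / 4)) ≠ 0 :=
    (isOpen_ball.inter isOpen_ball).measure_ne_zero volume ⟨y, mem_ball_self hs, hy⟩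
  obtain ⟨z, ⟨-, hzx⟩, hz⟩ := Measure.exists_mem_of_measure_ne_zero_of_ae hmeas
    (ae_restrict_of_ae_restrict_of_subset inter_subset_left
      (ae_ne_bot_of_lintegral_erealNegPart_ne_top hu.1 hneg))
  have hzx' : r / 2 + dist z x ≤ r := by linarith [mem_ball.1 hzx]
  have hxz : r / 4 + dist x z ≤ r / 2 := by linarith [mem_ball'.1 hzx]
  refine hxA ⟨r / 4, by positivity, (closedBall_subset_closedBall (by linarith)).trans hxr, ?_⟩
  exact ne_top_of_le_ne_top
    (hu.lintegral_erealNegPart_ne_top hK hz (half_pos hr)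
      ((closedBall_subset_closedBall' hzx').trans hxr))
    (lintegral_mono_set (ball_subset_ball' hxz))

lemma subset_negPartIntegrableCenters (hu : IsQNSnsE N K D u) (hK : 0 < K) (hD : IsOpen D)
    (hDc : IsPreconnected D) {x : E} (hxD : x ∈ D) (hx : u x ≠ ⊥) :
    D ⊆ negPartIntegrableCenters D u :=
  hDc.subset_left_of_subset_union (isOpen_negPartIntegrableCenters D u)
    (hu.isOpen_diff_negPartIntegrableCenters hK hD) disjoint_sdiff_right
    (by rw [union_sdiff_self]; exact subset_union_right)
    ⟨x, hxD, hu.mem_negPartIntegrableCenters hK hD hxD hx⟩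

end IsQNSnsE

end Centers

theorem stmt_5_general {N : ℕ} {K : ℝ} (hK : 1 ≤ K)
    (D : Set (EuclideanSpace ℝ (Fin N))) (hDo : IsOpen D) (hDc : IsConnected D)
    (u : EuclideanSpace ℝ (Fin N) → EReal)
    (hu : IsQNSnsE N K D u)
    (hne : ¬ ∀ x ∈ D, u x = ⊥) :
    (∀ᵐ x ∂(volume.restrict D), u x ≠ ⊥ ∧ u x ≠ ⊤) ∧
      LocallyIntegrableOn (fun x => (u x).toReal) D := by
  obtain ⟨x, hxD, hx⟩ : ∃ x ∈ D, u x ≠ ⊥ := by simpa using hne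
  have hcenters := hu.subset_negPartIntegrableCenters (one_pos.trans_le hK) hDo
    hDc.isPreconnected hxD hx
  refine ⟨?_, locallyIntegrableOn_toReal_of_subset_negPartIntegrableCenters hu.1 hu.2.2.1 hcenters⟩
  filter_upwards [ae_restrict_ne_bot_of_subset_negPartIntegrableCenters hu.1 hcenters]
    with y hy using ⟨hy, hu.2.1 y⟩

/-- a `K`-quasi-nearly subharmonic n.s. function `u : D → [−∞, ∞)` that is
not identically `−∞` is finite almost everywhere in `D` and locally integrable in `D`. -/
theorem stmt_5 {N : ℕ} (hN : 2 ≤ N) {K : ℝ} (hK : 1 ≤ K)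
    (D : Set (EuclideanSpace ℝ (Fin N))) (hDo : IsOpen D) (hDc : IsConnected D)
    (u : EuclideanSpace ℝ (Fin N) → EReal)
    (hu : IsQNSnsE N K D u)
    (hne : ¬ ∀ x ∈ D, u x = ⊥) :
    (∀ᵐ x ∂(volume.restrict D), u x ≠ ⊥ ∧ u x ≠ ⊤) ∧
      LocallyIntegrableOn (fun x => (u x).toReal) D :=
  stmt_5_general hK D hDo hDc u hu hne
end

section
/- (Minkowski-integral step) Let m > n ≥ 2 and let φ : [0,∞) → (0,∞) be increasing with ∫_{s₅}^{∞} s^{(n−1)/(m−1)} φ(s−s₀)^{−1/(m−1)} ds < ∞. Define φ₁(t) := ( ∫_{t−2}^{∞} φ(s−s₀)^{−1/(m−1)} ds )^{1−m} for large t. Then ∫_{s₅+s₀+2}^{∞} φ₁(t − s₀)^{−1/(n−1)} dt < ∞; more precisely, [ ∫_{s₅+s₀+2}^{∞} φ₁(t−s₀)^{−1/(n−1)} dt ]^{(n−1)/(m−1)} ≤ ∫_{s₅}^{∞} s^{(n−1)/(m−1)} φ(s−s₀)^{−1/(m−1)} ds, up to the stated elementary majorizations, via Minkowski's integral inequality with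 exponent p = (m−1)/(n−1). -/
/-!
Put `p = (m−1)/(n−1)`, `g(s) = φ(s−s₀)^{−1/(m−1)}` and `G(t) = ∫_{t−s₀−2}^∞ g`. Then
`φ₁(t−s₀)^{−1/(n−1)} ≤ G(t)^p`, and `G(t) = ∫ g(s) 1{t ≤ s+s₀+2} ds`, so Minkowski's integral
inequality in `L^p(dt)` on `[s₅+s₀+2, ∞)` gives
`‖G‖_p ≤ ∫ g(s) (s−s₅)₊^{1/p} ds ≤ ∫_{s₅}^∞ s^{1/p} g(s) ds`.
Minkowski's integral inequality follows from Hölder's inequality, applied to truncations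
`h ≤ G` with `∫ h^p < ∞` so that the factor `(∫ h^p)^{1/q}` can be cancelled.
-/

open MeasureTheory Set

/-- The function `φ₁(t) := ( ∫_{t−2}^{∞} φ(s−s₀)^{−1/(m−1)} ds )^{1−m}`. -/
noncomputable def phi1 (m s₀ : ℕ) (φ : ℝ → ℝ) (t : ℝ) : ℝ :=
  ((∫⁻ s in Ici (t - 2),
      ENNReal.ofReal (φ (s - s₀) ^ (-((1 : ℝ) / ((m : ℝ) - 1))))).toReal) ^ (1 - (m : ℝ))

open Filter Topology
open scoped ENNReal

namespace ENNReal

theorem rpow_one_div_le_of_le_mul_rpow {p q : ℝ} (hpq : p.HolderConjugate q) {a b : ℝ≥0∞}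
    (ha : a ≠ ∞) (h : a ≤ b * a ^ (1 / q)) : a ^ (1 / p) ≤ b := by
  rcases eq_or_ne a 0 with rfl | ha₀
  · rw [zero_rpow_of_pos (one_div_pos.2 hpq.pos)]
    exact bot_le
  rw [← ENNReal.mul_le_mul_iff_left (rpow_pos (pos_iff_ne_zero.2 ha₀) ha).ne'
    (rpow_ne_top_of_nonneg (one_div_pos.2 hpq.symm.pos).le ha), ← rpow_add _ _ ha₀ ha,
    hpq.one_div_add_one_div, div_one, rpow_one]
  exact h

end ENNReal

section Minkowski

variable {α β : Type*} [MeasurableSpace α] [MeasurableSpace β] {μ : Measure α} {ν : Measure β}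
  [SFinite μ] {F : α → β → ℝ≥0∞}

theorem ENNReal.lintegral_rpow_le_of_le_lintegral [SFinite ν] {p : ℝ} (hp : 1 < p)
    (hF : Measurable (Function.uncurry F)) {h : β → ℝ≥0∞} (hh : Measurable h)
    (hh_le : ∀ t, h t ≤ ∫⁻ s, F s t ∂μ) (hh_fin : ∫⁻ t, h t ^ p ∂ν ≠ ∞) :
    ∫⁻ t, h t ^ p ∂ν ≤ (∫⁻ s, (∫⁻ t, F s t ^ p ∂ν) ^ (1 / p) ∂μ) ^ p := by
  set q := p.conjExponent
  have hpq : p.HolderConjugate q := .conjExponent hp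
  set A := ∫⁻ t, h t ^ p ∂ν
  set B := ∫⁻ s, (∫⁻ t, F s t ^ p ∂ν) ^ (1 / p) ∂μ
  have hFt (t : β) : Measurable (F · t) := hF.comp measurable_prodMk_right
  have hFs (s : α) : Measurable (F s) := hF.comp measurable_prodMk_left
  suffices A ≤ B * A ^ (1 / q) by
    rw [← ENNReal.rpow_inv_le_iff hpq.pos, ← one_div]
    exact ENNReal.rpow_one_div_le_of_le_mul_rpow hpq hh_fin this
  calc A = ∫⁻ t, h t ^ (p - 1) * h t ∂ν := lintegral_congr fun t => by
        simpa using ENNReal.rpow_add_of_nonneg (x := h t) (p - 1) 1 (by linarith) zero_le_one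
    _ ≤ ∫⁻ t, h t ^ (p - 1) * ∫⁻ s, F s t ∂μ ∂ν :=
        lintegral_mono fun t => by gcongr; exact hh_le t
    _ = ∫⁻ t, ∫⁻ s, h t ^ (p - 1) * F s t ∂μ ∂ν :=
        lintegral_congr fun t => (lintegral_const_mul _ (hFt t)).symm
    _ = ∫⁻ s, ∫⁻ t, F s t * h t ^ (p - 1) ∂ν ∂μ := by
        rw [lintegral_lintegral_swap]
        · simp only [mul_comm]
        · exact ((hh.comp measurable_fst).pow_const _ |>.mul
            (hF.comp measurable_swap)).aemeasurable
    _ ≤ ∫⁻ s, (∫⁻ t, F s t ^ p ∂ν) ^ (1 / p) * (∫⁻ t, (h t ^ (p - 1)) ^ q ∂ν) ^ (1 / q) ∂μ :=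
        lintegral_mono fun s => ENNReal.lintegral_mul_le_Lp_mul_Lq ν hpq (hFs s).aemeasurable
          (hh.pow_const _).aemeasurable
    _ = B * A ^ (1 / q) := by
        simp_rw [← ENNReal.rpow_mul, hpq.sub_one_mul_conj]
        exact lintegral_mul_const' _ _
          (ENNReal.rpow_ne_top_of_nonneg (one_div_pos.2 hpq.symm.pos).le hh_fin)

theorem ENNReal.Lp_lintegral_le_lintegral_Lp [SigmaFinite ν] {p : ℝ} (hp : 1 ≤ p)
    (hF : Measurable (Function.uncurry F)) :
    (∫⁻ t, (∫⁻ s, F s t ∂μ) ^ p ∂ν) ^ (1 / p) ≤ ∫⁻ s, (∫⁻ t, F s t ^ p ∂ν) ^ (1 / p) ∂μ := by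
  rcases hp.eq_or_lt with rfl | hp
  · simp only [div_one, ENNReal.rpow_one]
    exact (lintegral_lintegral_swap hF.aemeasurable).ge
  set H := fun t => ∫⁻ s, F s t ∂μ
  have hH : Measurable H := hF.lintegral_prod_left'
  set h : ℕ → β → ℝ≥0∞ := fun n => (spanningSets ν n).indicator fun t => min (H t) n
  have hh (n : ℕ) : Measurable (h n) :=
    (hH.min measurable_const).indicator (measurableSet_spanningSets ν n)
  have hh_le (n : ℕ) (t : β) : h n t ≤ H t := indicator_le (fun _ _ => min_le_left _ _) t
  have hh_fin (n : ℕ) : ∫⁻ t, h n t ^ p ∂ν ≠ ∞ := by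
    refine ne_top_of_le_ne_top (b := (n : ℝ≥0∞) ^ p * ν (spanningSets ν n)) ?_ ?_
    · exact ENNReal.mul_ne_top
        (ENNReal.rpow_ne_top_of_nonneg (by linarith) (ENNReal.natCast_ne_top n))
        (measure_spanningSets_lt_top ν n).ne
    · rw [← lintegral_indicator_const (measurableSet_spanningSets ν n)]
      refine lintegral_mono fun t => ?_
      by_cases ht : t ∈ spanningSets ν n
      · simp only [h, indicator_of_mem ht]
        gcongr
        exact min_le_right _ _
      · simp [h, indicator_of_notMem ht, ENNReal.zero_rpow_of_pos (by linarith : 0 < p)]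
  have h_tendsto (t : β) : Tendsto (fun n => h n t ^ p) atTop (𝓝 (H t ^ p)) := by
    refine (ENNReal.continuous_rpow_const.tendsto _).comp ?_
    have : Tendsto (fun n : ℕ => min (H t) n) atTop (𝓝 (H t)) := by
      simpa using tendsto_const_nhds.min ENNReal.tendsto_nat_nhds_top
    refine this.congr' (eventually_atTop.2 ⟨spanningSetsIndex ν t, fun n hn => ?_⟩)
    simp only [h, indicator_of_mem (monotone_spanningSets ν hn (mem_spanningSetsIndex ν t))]
  rw [one_div, ENNReal.rpow_inv_le_iff (by linarith), ← one_div]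
  calc ∫⁻ t, H t ^ p ∂ν = ∫⁻ t, liminf (fun n => h n t ^ p) atTop ∂ν :=
        lintegral_congr fun t => (h_tendsto t).liminf_eq.symm
    _ ≤ liminf (fun n => ∫⁻ t, h n t ^ p ∂ν) atTop :=
        lintegral_liminf_le fun n => (hh n).pow_const p
    _ ≤ _ := liminf_le_of_frequently_le' <| .of_forall fun n =>
        ENNReal.lintegral_rpow_le_of_le_lintegral hp hF (hh n) (hh_le n) (hh_fin n)

end Minkowski

theorem lintegral_Ici_rpow_lintegral_Ici_le {g : ℝ → ℝ≥0∞} (hg : Measurable g) {p : ℝ}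
    (hp : 1 ≤ p) (a c : ℝ) :
    (∫⁻ t in Ici (a + c), (∫⁻ s in Ici (t - c), g s) ^ p) ^ (1 / p) ≤
      ∫⁻ s, g s * ENNReal.ofReal (s - a) ^ (1 / p) := by
  set F : ℝ → ℝ → ℝ≥0∞ := fun s t =>
    {x : ℝ × ℝ | x.2 ≤ x.1 + c}.indicator (g ∘ Prod.fst) (s, t)
  have hF : Measurable (Function.uncurry F) := (hg.comp measurable_fst).indicator
    (measurableSet_le measurable_snd (measurable_fst.add_const c))
  have hF_left (t : ℝ) : ∫⁻ s, F s t = ∫⁻ s in Ici (t - c), g s := by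
    rw [← lintegral_indicator measurableSet_Ici]
    refine lintegral_congr fun s => ?_
    simp [F, indicator]
  have hF_right (s : ℝ) :
      (∫⁻ t in Ici (a + c), F s t ^ p) ^ (1 / p) = g s * ENNReal.ofReal (s - a) ^ (1 / p) := by
    have hF_pow (t : ℝ) : F s t ^ p = (Iic (s + c)).indicator (fun _ => g s ^ p) t := by
      by_cases ht : t ≤ s + c <;> simp [F, ht, ENNReal.zero_rpow_of_pos (by linarith : 0 < p)]
    simp_rw [hF_pow]
    rw [lintegral_indicator_const measurableSet_Iic, Measure.restrict_apply measurableSet_Iic,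
      Iic_inter_Ici, Real.volume_Icc, add_sub_add_right_eq_sub,
      ENNReal.mul_rpow_of_nonneg _ _ (by positivity), ← ENNReal.rpow_mul,
      mul_one_div_cancel (by linarith), ENNReal.rpow_one]
  simpa only [hF_left, hF_right] using
    ENNReal.Lp_lintegral_le_lintegral_Lp (μ := volume) (ν := volume.restrict (Ici (a + c))) hp hF

theorem MonotoneOn.measurable_comp_max {f : ℝ → ℝ} {a : ℝ} (hf : MonotoneOn f (Ici a)) :
    Measurable fun s => f (max s a) :=
  Monotone.measurable fun _ _ hxy =>
    hf (mem_Ici.2 (le_max_right _ _)) (mem_Ici.2 (le_max_right _ _)) (max_le_max hxy le_rfl)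

theorem lintegral_ofReal_comp_max_mul_rpow_sub_le (ψ : ℝ → ℝ) {a r : ℝ} (ha : 0 ≤ a)
    (hr : 0 < r) :
    ∫⁻ s, ENNReal.ofReal (ψ (max s a)) * ENNReal.ofReal (s - a) ^ r ≤
      ∫⁻ s in Ici a, ENNReal.ofReal (s ^ r * ψ s) := by
  rw [← lintegral_indicator measurableSet_Ici]
  refine lintegral_mono fun s => ?_
  by_cases hs : a ≤ s
  · rw [indicator_of_mem (mem_Ici.2 hs), max_eq_left hs,
      ENNReal.ofReal_mul (Real.rpow_nonneg (ha.trans hs) _), mul_comm,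
      ENNReal.ofReal_rpow_of_nonneg (sub_nonneg.2 hs) hr.le]
    gcongr
    linarith
  · rw [ENNReal.ofReal_of_nonpos (p := s - a) (by linarith), ENNReal.zero_rpow_of_pos hr,
      mul_zero]
    exact zero_le

/-- Only an inequality, since `ENNReal.toReal ∞ = 0`. -/
theorem ofReal_phi1_rpow_le (m s₀ : ℕ) (φ : ℝ → ℝ) (t : ℝ) {n : ℝ}
    (hp : 0 ≤ ((m : ℝ) - 1) / (n - 1)) :
    ENNReal.ofReal (phi1 m s₀ φ t ^ (-((1 : ℝ) / (n - 1)))) ≤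
      (∫⁻ s in Ici (t - 2), ENNReal.ofReal (φ (s - s₀) ^ (-((1 : ℝ) / ((m : ℝ) - 1))))) ^
        (((m : ℝ) - 1) / (n - 1)) := by
  rw [phi1, ← Real.rpow_mul ENNReal.toReal_nonneg,
    show (1 - (m : ℝ)) * -(1 / (n - 1)) = ((m : ℝ) - 1) / (n - 1) by ring,
    ← ENNReal.ofReal_rpow_of_nonneg ENNReal.toReal_nonneg hp]
  exact ENNReal.rpow_le_rpow ENNReal.ofReal_toReal_le hp

theorem stmt_11_general (m n s₀ s₅ : ℕ) (hn : 2 ≤ n) (hmn : n < m) (hs : s₀ < s₅)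
    (φ : ℝ → ℝ) (hφmono : MonotoneOn φ (Set.Ici 0))
    (hint : ∫⁻ s in Ici (s₅ : ℝ),
        ENNReal.ofReal (s ^ (((n : ℝ) - 1) / ((m : ℝ) - 1)) *
          φ (s - s₀) ^ (-((1 : ℝ) / ((m : ℝ) - 1)))) < ⊤) :
    (∫⁻ t in Ici ((s₅ : ℝ) + s₀ + 2),
        ENNReal.ofReal ((phi1 m s₀ φ (t - s₀)) ^ (-((1 : ℝ) / ((n : ℝ) - 1))))) < ⊤ ∧
    (∫⁻ t in Ici ((s₅ : ℝ) + s₀ + 2),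
        ENNReal.ofReal ((phi1 m s₀ φ (t - s₀)) ^ (-((1 : ℝ) / ((n : ℝ) - 1))))) ^
          (((n : ℝ) - 1) / ((m : ℝ) - 1))
      ≤ ∫⁻ s in Ici (s₅ : ℝ),
          ENNReal.ofReal (s ^ (((n : ℝ) - 1) / ((m : ℝ) - 1)) *
            φ (s - s₀) ^ (-((1 : ℝ) / ((m : ℝ) - 1)))) := by
  set p : ℝ := ((m : ℝ) - 1) / ((n : ℝ) - 1)
  have hnm : (n : ℝ) < m := by exact_mod_cast hmn
  have hn₁ : (1 : ℝ) < n := by exact_mod_cast hn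
  have hp : 1 ≤ p := (one_le_div (by linarith)).2 (by linarith)
  rw [show ((n : ℝ) - 1) / ((m : ℝ) - 1) = 1 / p from (one_div_div _ _).symm] at hint ⊢
  set ψ : ℝ → ℝ := fun s => φ (s - s₀) ^ (-((1 : ℝ) / ((m : ℝ) - 1)))
  have hs' : (s₀ : ℝ) ≤ s₅ := by exact_mod_cast hs.le
  -- `ψ` is only known to be measurable on `[s₀, ∞)`, so it is frozen below `s₅`.
  have hψ : Measurable fun s => ENNReal.ofReal (ψ (max s s₅)) := by
    have : MonotoneOn (fun s => φ (s - s₀)) (Ici (s₅ : ℝ)) := fun x hx y hy hxy =>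
      hφmono (sub_nonneg.2 (hs'.trans hx)) (sub_nonneg.2 (hs'.trans hy)) (by linarith)
    exact ENNReal.measurable_ofReal.comp (this.measurable_comp_max.pow_const _)
  have hLHS : ∫⁻ t in Ici ((s₅ : ℝ) + s₀ + 2),
        ENNReal.ofReal (phi1 m s₀ φ (t - s₀) ^ (-((1 : ℝ) / ((n : ℝ) - 1)))) ≤
      ∫⁻ t in Ici ((s₅ : ℝ) + (s₀ + 2)),
        (∫⁻ s in Ici (t - (s₀ + 2)), ENNReal.ofReal (ψ (max s s₅))) ^ p := by
    rw [← add_assoc]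
    refine setLIntegral_mono' measurableSet_Ici fun t ht => ?_
    refine (ofReal_phi1_rpow_le m s₀ φ _ (by positivity)).trans_eq ?_
    rw [sub_sub]
    refine congr_arg (· ^ p) (setLIntegral_congr_fun measurableSet_Ici fun s hs => ?_)
    rw [max_eq_left (by simp only [mem_Ici] at ht hs; linarith)]
  have hmain := ((ENNReal.rpow_le_rpow hLHS (by positivity)).trans
    (lintegral_Ici_rpow_lintegral_Ici_le hψ hp _ _)).trans
    (lintegral_ofReal_comp_max_mul_rpow_sub_le ψ (Nat.cast_nonneg s₅) (by positivity))
  exact ⟨(ENNReal.rpow_lt_top_iff_of_pos (by positivity)).1 (hmain.trans_lt hint), hmain⟩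

/-- Minkowski-integral step: for `m > n ≥ 2` and increasing positive `φ` with
`∫_{s₅}^{∞} s^{(n−1)/(m−1)} φ(s−s₀)^{−1/(m−1)} ds < ∞`, the function
`φ₁(t) := ( ∫_{t−2}^{∞} φ(s−s₀)^{−1/(m−1)} ds )^{1−m}` satisfies
`∫_{s₅+s₀+2}^{∞} φ₁(t−s₀)^{−1/(n−1)} dt < ∞`; more precisely,
`[ ∫_{s₅+s₀+2}^{∞} φ₁(t−s₀)^{−1/(n−1)} dt ]^{(n−1)/(m−1)}
  ≤ ∫_{s₅}^{∞} s^{(n−1)/(m−1)} φ(s−s₀)^{−1/(m−1)} ds`,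
via Minkowski's integral inequality with exponent `p = (m−1)/(n−1)`. -/
theorem stmt_11 (m n s₀ s₅ : ℕ) (hn : 2 ≤ n) (hmn : n < m) (hs : s₀ < s₅)
    (φ : ℝ → ℝ) (hφmono : MonotoneOn φ (Set.Ici 0)) (hφpos : ∀ s : ℝ, 0 ≤ s → 0 < φ s)
    (hfin : ∀ t : ℝ, (s₅ : ℝ) + 2 ≤ t →
      ∫⁻ s in Ici (t - 2),
        ENNReal.ofReal (φ (s - s₀) ^ (-((1 : ℝ) / ((m : ℝ) - 1)))) < ⊤)
    (hint : ∫⁻ s in Ici (s₅ : ℝ),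
        ENNReal.ofReal (s ^ (((n : ℝ) - 1) / ((m : ℝ) - 1)) *
          φ (s - s₀) ^ (-((1 : ℝ) / ((m : ℝ) - 1)))) < ⊤) :
    (∫⁻ t in Ici ((s₅ : ℝ) + s₀ + 2),
        ENNReal.ofReal ((phi1 m s₀ φ (t - s₀)) ^ (-((1 : ℝ) / ((n : ℝ) - 1))))) < ⊤ ∧
    (∫⁻ t in Ici ((s₅ : ℝ) + s₀ + 2),
        ENNReal.ofReal ((phi1 m s₀ φ (t - s₀)) ^ (-((1 : ℝ) / ((n : ℝ) - 1))))) ^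
          (((n : ℝ) - 1) / ((m : ℝ) - 1))
      ≤ ∫⁻ s in Ici (s₅ : ℝ),
          ENNReal.ofReal (s ^ (((n : ℝ) - 1) / ((m : ℝ) - 1)) *
            φ (s - s₀) ^ (-((1 : ℝ) / ((m : ℝ) - 1)))) :=
  stmt_11_general m n s₀ s₅ hn hmn hs φ hφmono hint
end
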